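/- Let d ≥ 1, n ≥ 1 and N ≥ 2n+1 be integers, let p be a real d-variate trigonometric polynomial of degree at most n, set α = 2n/N, and set A = max_{θ_k ∈ Θ_N^d} p(θ_k) and B = min_{θ_k ∈ Θ_N^d} p(θ_k). If p(θ_k) > 0 for all θ_k ∈ Θ_N^d and A/B < ( 1 + (1 − α)^{d/2} ) / ( 1 − (1 − α)^{d/2} ), then p(θ) > 0 for all θ ∈ ℝ^d. -/

import Mathlib

/-- The uniform sampling grid point in `[0, 2π]^d` indexed by `k ∈ {0,…,N−1}^d`. -/
noncomputable def trigGrid (N : ℕ) {d : ℕ} (k : Fin d → Fin N) : Fin d → ℝ :=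
  fun i => 2 * Real.pi * (k i : ℝ) / N

/-- `p : ℝ^d → ℂ` is a `d`-variate trigonometric polynomial of degree at most `n`. -/
noncomputable def IsTrigPoly (d n : ℕ) (p : (Fin d → ℝ) → ℂ) : Prop :=
  ∃ c : (Fin d → ℤ) → ℂ, ∀ θ : Fin d → ℝ,
    p θ = ∑ k ∈ Fintype.piFinset (fun _ : Fin d => Finset.Icc (-(n : ℤ)) (n : ℤ)),
      c k * Complex.exp (Complex.I * ((∑ i, (k i : ℝ) * θ i : ℝ) : ℂ))

/-- The univariate Dirichlet kernel `D_l(t) = Σ_{k=−l}^{l} exp(i k t)`. -/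
noncomputable def dirichletKer (l : ℕ) (t : ℝ) : ℂ :=
  ∑ k ∈ Finset.Icc (-(l : ℤ)) (l : ℤ), Complex.exp (Complex.I * (k : ℂ) * (t : ℂ))

/-- The univariate de la Vallée-Poussin kernel `D_{n,m}(t) = (1/(m−n)) Σ_{l=n}^{m−1} D_l(t)`. -/
noncomputable def vpKer (n m : ℕ) (t : ℝ) : ℂ :=
  (1 / ((m : ℂ) - (n : ℂ))) * ∑ l ∈ Finset.Ico n m, dirichletKer l t

/-!
Sampling on the grid reproduces trigonometric polynomials of degree `≤ n` exactly against the
tensor product `K` of de la Vallée-Poussin kernels `D_{n,N-n}`: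
`N^d p(θ) = ∑ₖ p(θₖ) K(θ - θₖ)` and `∑ₖ K(θ - θₖ) = N^d`. Up to a unimodular factor,
`D_{n,N-n}(t)` is the product of the geometric sums `∑_{j<N} e^{ijt}` and `∑_{j<N-2n} e^{ijt}`
divided by `N - 2n`, so Cauchy–Schwarz and discrete Parseval bound its `ℓ¹` norm on the grid,
giving `∑ₖ |K(θ - θₖ)| ≤ N^d (1 - α)^{-d/2}`. With the real weights `wₖ = Re K(θ - θₖ) / N^d`,
which sum to `1`, the values `p(θₖ) ∈ [B, A]` force `p(θ) ≥ B - (A - B)(∑ₖ |wₖ| - 1) / 2`, and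
this is positive exactly under the ratio condition.
-/

open Complex Finset
open scoped Real

lemma exp_I_mul_intCast_mul (a : ℤ) (t : ℝ) : exp (I * a * t) = exp (I * t) ^ a := by
  rw [← exp_int_mul]; ring_nf

lemma exp_I_mul_sub_trigGrid (N k : ℕ) (t : ℝ) :
    exp (I * ↑(t - 2 * π * k / N)) = exp (I * t) * (exp (2 * π * I / N) ^ k)⁻¹ := by
  rw [← Complex.exp_nat_mul, ← Complex.exp_neg, ← exp_add]; push_cast; ring_nf

lemma sum_exp_I_mul_sub_trigGrid_zpow {N : ℕ} {c : ℤ} (hc : |c| < N) (t : ℝ) :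
    ∑ k : Fin N, exp (I * ↑(t - 2 * π * k / N)) ^ c = if c = 0 then (N : ℂ) else 0 := by
  have hN : N ≠ 0 := by rintro rfl; exact absurd hc (by simp)
  set ζ := exp (2 * π * I / N)
  have hζ : IsPrimitiveRoot ζ N := isPrimitiveRoot_exp N hN
  have hterm (k : ℕ) :
      exp (I * ↑(t - 2 * π * k / N)) ^ c = exp (I * t) ^ c * (ζ ^ (-c)) ^ k := by
    rw [exp_I_mul_sub_trigGrid, mul_zpow, ← zpow_natCast, ← zpow_natCast, inv_zpow', ← zpow_mul,
      ← zpow_mul]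
    congr 2
    ring
  simp only [hterm, Fin.sum_univ_eq_sum_range (fun k => exp (I * t) ^ c * (ζ ^ (-c)) ^ k),
    ← mul_sum]
  split_ifs with h0
  · simp [h0]
  · have hne : ζ ^ (-c) ≠ 1 := fun h =>
      h0 (by simpa using Int.eq_zero_of_abs_lt_dvd ((hζ.zpow_eq_one_iff_dvd _).1 h) (by simpa))
    have hpow : (ζ ^ (-c)) ^ N = 1 := by
      rw [← zpow_natCast, ← zpow_mul, mul_comm, zpow_mul, zpow_natCast ζ N, hζ.pow_eq_one,
        one_zpow]
    rw [geom_sum_eq hne, hpow, sub_self, zero_div, mul_zero]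

lemma geom_sum_succ_mul_geom_sum_succ {R : Type*} [CommSemiring R] (z : R) (a b : ℕ) :
    (∑ i ∈ range (a + 1), z ^ i) * ∑ j ∈ range (b + 1), z ^ j
      = z * (∑ i ∈ range a, z ^ i) * (∑ j ∈ range b, z ^ j) + ∑ i ∈ range (a + b + 1), z ^ i := by
  rw [show a + b + 1 = b + 1 + a by ring, sum_range_add (fun i => z ^ i) (b + 1) a,
    sum_range_succ' _ a, sum_range_succ _ b]
  simp_rw [pow_succ, pow_add, ← sum_mul, ← mul_sum]
  ring

lemma pow_mul_dirichletKer (l : ℕ) (t : ℝ) :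
    exp (I * t) ^ l * dirichletKer l t = ∑ j ∈ range (2 * l + 1), exp (I * t) ^ j := by
  have hz : exp (I * t) ≠ 0 := exp_ne_zero _
  simp_rw [dirichletKer, exp_I_mul_intCast_mul, mul_sum]
  refine sum_nbij' (fun a => (a + l).toNat) (fun j => (j : ℤ) - l) ?_ ?_ ?_ ?_ ?_
  · intro a ha; simp only [mem_Icc, mem_range] at ha ⊢; omega
  · intro j hj; simp only [mem_Icc, mem_range] at hj ⊢; omega
  · intro a ha; simp only [mem_Icc] at ha; omega
  · intro j hj; simp only [mem_range] at hj; omega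
  · intro a ha
    simp only [mem_Icc] at ha
    rw [← zpow_natCast, ← zpow_natCast, Int.toNat_of_nonneg (by omega), ← zpow_add₀ hz, add_comm]

lemma pow_mul_sum_dirichletKer (n b : ℕ) (t : ℝ) :
    exp (I * t) ^ (n + b) * ∑ l ∈ Ico n (n + b), dirichletKer l t
      = exp (I * t) * (∑ j ∈ range (2 * n + b), exp (I * t) ^ j)
          * ∑ j ∈ range b, exp (I * t) ^ j := by
  induction b with
  | zero => simp
  | succ b ih =>
    rw [← add_assoc, sum_Ico_succ_top (by omega), ← add_assoc, mul_assoc (exp _),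
      geom_sum_succ_mul_geom_sum_succ, ← ih, show 2 * n + b + b + 1 = 2 * (n + b) + 1 by ring,
      ← pow_mul_dirichletKer]
    ring

lemma norm_vpKer (n q : ℕ) (t : ℝ) :
    ‖vpKer n (n + q) t‖
      = ‖∑ j ∈ range (2 * n + q), exp (I * t) ^ j‖ * ‖∑ j ∈ range q, exp (I * t) ^ j‖ / q := by
  have hz : ‖exp (I * t)‖ = 1 := by rw [mul_comm]; exact norm_exp_ofReal_mul_I t
  have hfac := congrArg norm (pow_mul_sum_dirichletKer n q t)
  simp only [norm_mul, norm_pow, hz, one_pow, one_mul] at hfac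
  rw [vpKer, norm_mul, hfac, Nat.cast_add, add_sub_cancel_left, norm_div, norm_one, norm_natCast]
  ring

lemma sq_norm_geom_sum_exp_I_mul (r : ℕ) (s : ℝ) :
    ((‖∑ j ∈ range r, exp (I * s) ^ j‖ ^ 2 : ℝ) : ℂ)
      = ∑ i ∈ range r, ∑ j ∈ range r, exp (I * s) ^ ((i : ℤ) - j) := by
  have hz : exp (I * s) ≠ 0 := exp_ne_zero _
  have hconj : (starRingEnd ℂ) (exp (I * s)) = (exp (I * s))⁻¹ := by
    rw [← exp_conj, ← Complex.exp_neg]; simp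
  rw [← normSq_eq_norm_sq, ← mul_conj, map_sum, sum_mul_sum]
  simp_rw [map_pow, hconj, inv_pow, zpow_sub₀ hz, zpow_natCast, div_eq_mul_inv]

lemma sum_sq_norm_geom_sum_exp_I_mul_sub_trigGrid {N r : ℕ} (hr : r ≤ N) (t : ℝ) :
    ∑ k : Fin N, ‖∑ j ∈ range r, exp (I * ↑(t - 2 * π * k / N)) ^ j‖ ^ 2 = N * r := by
  apply ofReal_injective
  simp only [ofReal_sum, sq_norm_geom_sum_exp_I_mul, ofReal_mul, ofReal_natCast]
  rw [sum_comm]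
  calc _ = ∑ i ∈ range r, (N : ℂ) := sum_congr rfl fun i hi => by
          have hlt : ∀ j ∈ range r, |(i : ℤ) - j| < N := fun j hj => by
            simp only [mem_range] at hi hj; rw [abs_lt]; omega
          rw [sum_comm, sum_eq_single_of_mem i hi, sum_exp_I_mul_sub_trigGrid_zpow (hlt i hi),
            if_pos (sub_self _)]
          intro j hj hji
          rw [sum_exp_I_mul_sub_trigGrid_zpow (hlt j hj), if_neg (by omega)]
    _ = N * r := by simp [mul_comm]

lemma sum_norm_vpKer_sub_trigGrid_le {n N : ℕ} (hN : 2 * n < N) (t : ℝ) :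
    ∑ k : Fin N, ‖vpKer n (N - n) (t - 2 * π * k / N)‖ ≤ N * √(N / (N - 2 * n)) := by
  obtain ⟨q, rfl⟩ : ∃ q, N = 2 * n + q := ⟨N - 2 * n, by omega⟩
  have hq : (0 : ℝ) < q := by norm_cast; omega
  have hNq : ((2 * n + q : ℕ) : ℝ) - 2 * n = q := by push_cast; ring
  rw [show 2 * n + q - n = n + q by omega, hNq]
  simp_rw [norm_vpKer, ← sum_div]
  set N' := 2 * n + q
  calc _ ≤ √(∑ k : Fin N', ‖∑ j ∈ range N', exp (I * ↑(t - 2 * π * k / N')) ^ j‖ ^ 2)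
          * √(∑ k : Fin N', ‖∑ j ∈ range q, exp (I * ↑(t - 2 * π * k / N')) ^ j‖ ^ 2) / q := by
        gcongr; exact Real.sum_mul_le_sqrt_mul_sqrt _ _ _
    _ = √(N' * N') * √(N' * q) / q := by
        rw [sum_sq_norm_geom_sum_exp_I_mul_sub_trigGrid le_rfl,
          sum_sq_norm_geom_sum_exp_I_mul_sub_trigGrid (by omega)]
    _ = N' * √(N' / q) := by
        have hsq : √(q : ℝ) ^ 2 = q := Real.sq_sqrt hq.le
        rw [Real.sqrt_mul_self (by positivity), Real.sqrt_div' _ hq.le,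
          Real.sqrt_mul (by positivity)]
        field_simp
        rw [hsq]

lemma exp_I_mul_trigGrid_zpow_mul (N k : ℕ) (θ : ℝ) (j a : ℤ) :
    exp (I * ↑(2 * π * k / N)) ^ j * exp (I * ↑(θ - 2 * π * k / N)) ^ a
      = exp (I * θ) ^ j * exp (I * ↑(θ - 2 * π * k / N)) ^ (a - j) := by
  have hsplit : exp (I * θ) = exp (I * ↑(2 * π * k / N)) * exp (I * ↑(θ - 2 * π * k / N)) := by
    rw [← exp_add]; push_cast; ring_nf
  rw [hsplit, mul_zpow, mul_assoc (exp _ ^ j), ← zpow_add₀ (exp_ne_zero _), add_sub_cancel]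

lemma sum_exp_I_mul_trigGrid_zpow_mul_dirichletKer {N l : ℕ} {j : ℤ} (hjl : |j| ≤ l)
    (hlN : l + |j| < N) (θ : ℝ) :
    ∑ k : Fin N, exp (I * ↑(2 * π * k / N)) ^ j * dirichletKer l (θ - 2 * π * k / N)
      = N * exp (I * θ) ^ j := by
  have hj : j ∈ Icc (-(l : ℤ)) l := mem_Icc.2 (abs_le.1 hjl)
  have hlt : ∀ a ∈ Icc (-(l : ℤ)) l, |a - j| < N := fun a ha => by
    rw [mem_Icc] at ha; rw [abs_lt]; have := abs_le.1 (le_refl |j|); omega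
  simp_rw [dirichletKer, exp_I_mul_intCast_mul, mul_sum, exp_I_mul_trigGrid_zpow_mul]
  rw [sum_comm, sum_eq_single_of_mem j hj]
  · rw [← mul_sum, sum_exp_I_mul_sub_trigGrid_zpow (hlt j hj), if_pos (sub_self _), mul_comm]
  · intro a ha haj
    rw [← mul_sum, sum_exp_I_mul_sub_trigGrid_zpow (hlt a ha), if_neg (sub_ne_zero.2 haj),
      mul_zero]

lemma sum_exp_I_mul_trigGrid_zpow_mul_vpKer {n N : ℕ} (hN : 2 * n < N) {j : ℤ} (hj : |j| ≤ n)
    (θ : ℝ) :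
    ∑ k : Fin N, exp (I * ↑(2 * π * k / N)) ^ j * vpKer n (N - n) (θ - 2 * π * k / N)
      = N * exp (I * θ) ^ j := by
  have hq : ((N - n : ℕ) : ℂ) - n = (N - n - n : ℕ) := by
    rw [Nat.cast_sub (by omega : n ≤ N - n)]
  have hq0 : ((N - n - n : ℕ) : ℂ) ≠ 0 := by norm_cast; omega
  simp_rw [vpKer, hq, mul_sum, mul_left_comm _ (1 / _ : ℂ)]
  rw [sum_comm]
  simp_rw [← mul_sum]
  rw [sum_congr rfl fun l hl => sum_exp_I_mul_trigGrid_zpow_mul_dirichletKer (N := N)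
    (hj.trans (by exact_mod_cast (mem_Ico.1 hl).1)) (by have := (mem_Ico.1 hl).2; omega) θ,
    sum_const, Nat.card_Ico, nsmul_eq_mul]
  field_simp

noncomputable def vpProdKer (n N : ℕ) {d : ℕ} (θ : Fin d → ℝ) (k : Fin d → Fin N) : ℂ :=
  ∏ i, vpKer n (N - n) (θ i - trigGrid N k i)

noncomputable def vpWeight (n N : ℕ) {d : ℕ} (θ : Fin d → ℝ) (k : Fin d → Fin N) : ℝ :=
  (vpProdKer n N θ k).re / N ^ d

lemma exp_I_mul_sum_eq_prod {d : ℕ} (v : Fin d → ℤ) (x : Fin d → ℝ) :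
    exp (I * ↑(∑ i, (v i : ℝ) * x i)) = ∏ i, exp (I * x i) ^ v i := by
  push_cast
  rw [mul_sum, exp_sum]
  exact prod_congr rfl fun i _ => by rw [← exp_I_mul_intCast_mul, mul_assoc]

section Multivariate

variable {n N d : ℕ}

lemma sum_exp_I_mul_trigGrid_mul_vpProdKer (hN : 2 * n < N) {v : Fin d → ℤ}
    (hv : ∀ i, |v i| ≤ n) (θ : Fin d → ℝ) :
    ∑ k : Fin d → Fin N, exp (I * ↑(∑ i, (v i : ℝ) * trigGrid N k i)) * vpProdKer n N θ k
      = N ^ d * exp (I * ↑(∑ i, (v i : ℝ) * θ i)) := by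
  simp_rw [exp_I_mul_sum_eq_prod, vpProdKer, ← prod_mul_distrib, trigGrid]
  rw [← Fintype.prod_sum (fun i (x : Fin N) => exp (I * ↑(2 * π * x / N)) ^ v i
    * vpKer n (N - n) (θ i - 2 * π * x / N))]
  simp_rw [sum_exp_I_mul_trigGrid_zpow_mul_vpKer hN (hv _), prod_mul_distrib, prod_const,
    card_univ, Fintype.card_fin]

lemma IsTrigPoly.sum_trigGrid_mul_vpProdKer {p : (Fin d → ℝ) → ℂ} (hp : IsTrigPoly d n p)
    (hN : 2 * n < N) (θ : Fin d → ℝ) :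
    ∑ k : Fin d → Fin N, p (trigGrid N k) * vpProdKer n N θ k = N ^ d * p θ := by
  obtain ⟨c, hc⟩ := hp
  simp_rw [hc, sum_mul, mul_assoc]
  rw [sum_comm, mul_sum]
  refine sum_congr rfl fun v hv => ?_
  have hv' : ∀ i, |v i| ≤ n := fun i => abs_le.2 (mem_Icc.1 (Fintype.mem_piFinset.1 hv i))
  rw [← mul_sum, sum_exp_I_mul_trigGrid_mul_vpProdKer hN hv']
  ring

lemma sum_norm_vpProdKer_le (hN : 2 * n < N) (θ : Fin d → ℝ) :
    ∑ k : Fin d → Fin N, ‖vpProdKer n N θ k‖ ≤ (N * √(N / (N - 2 * n))) ^ d := by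
  simp_rw [vpProdKer, norm_prod, trigGrid]
  rw [← Fintype.prod_sum (fun i (x : Fin N) => ‖vpKer n (N - n) (θ i - 2 * π * x / N)‖)]
  calc _ ≤ ∏ _i : Fin d, (N * √(N / (N - 2 * n)) : ℝ) :=
        prod_le_prod (fun i _ => sum_nonneg fun _ _ => norm_nonneg _)
          fun i _ => sum_norm_vpKer_sub_trigGrid_le hN (θ i)
    _ = _ := by rw [prod_const, card_univ, Fintype.card_fin]

lemma IsTrigPoly.sum_trigGrid_mul_vpWeight {p : (Fin d → ℝ) → ℝ}
    (hp : IsTrigPoly d n fun θ => (p θ : ℂ)) (hN : 2 * n < N) (θ : Fin d → ℝ) :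
    ∑ k : Fin d → Fin N, p (trigGrid N k) * vpWeight n N θ k = p θ := by
  have hNd : (N : ℝ) ^ d ≠ 0 := pow_ne_zero d (by norm_cast; omega)
  have h := congrArg re (hp.sum_trigGrid_mul_vpProdKer hN θ)
  rw [← ofReal_natCast, ← ofReal_pow, ← ofReal_mul, ofReal_re, re_sum] at h
  simp_rw [re_ofReal_mul] at h
  simp_rw [vpWeight, ← mul_div_assoc, ← sum_div, h]
  field_simp

lemma sum_vpWeight (hN : 2 * n < N) (θ : Fin d → ℝ) :
    ∑ k : Fin d → Fin N, vpWeight n N θ k = 1 := by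
  have h : ∑ k, vpProdKer n N θ k = N ^ d := by
    simpa using sum_exp_I_mul_trigGrid_mul_vpProdKer hN (v := 0) (by simp) θ
  simp_rw [vpWeight, ← sum_div, ← re_sum, h, ← ofReal_natCast, ← ofReal_pow, ofReal_re]
  exact div_self (pow_ne_zero d (by norm_cast; omega))

lemma sum_abs_vpWeight_le (hN : 2 * n < N) (θ : Fin d → ℝ) :
    ∑ k : Fin d → Fin N, |vpWeight n N θ k| ≤ ((1 - 2 * n / N : ℝ) ^ ((d : ℝ) / 2))⁻¹ := by
  have hNR : (0 : ℝ) < N := by norm_cast; omega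
  have hq : (0 : ℝ) < N - 2 * n := sub_pos.2 (by exact_mod_cast hN)
  calc ∑ k, |vpWeight n N θ k| ≤ ∑ k, ‖vpProdKer n N θ k‖ / N ^ d := sum_le_sum fun k _ => by
        rw [vpWeight, abs_div, abs_of_pos (pow_pos hNR d)]; gcongr; exact abs_re_le_norm _
    _ ≤ (N * √(N / (N - 2 * n))) ^ d / N ^ d := by
        rw [← sum_div]; gcongr; exact sum_norm_vpProdKer_le hN θ
    _ = _ := by
        rw [mul_pow, mul_div_cancel_left₀ _ (by positivity), one_sub_div hNR.ne', ← inv_div,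
          Real.sqrt_inv, inv_pow, Real.sqrt_eq_rpow, ← Real.rpow_natCast,
          ← Real.rpow_mul (by positivity)]
        ring_nf

end Multivariate

lemma sub_mul_sub_one_div_two_le_sum_mul {ι : Type*} {s : Finset ι} {x w : ι → ℝ} {A B C : ℝ}
    (hx : ∀ i ∈ s, x i ∈ Set.Icc B A) (hw : ∑ i ∈ s, w i = 1) (hC : ∑ i ∈ s, |w i| ≤ C) :
    B - (A - B) * (C - 1) / 2 ≤ ∑ i ∈ s, x i * w i := by
  obtain ⟨i₀, hi₀⟩ := nonempty_of_sum_ne_zero (hw ▸ one_ne_zero)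
  have hBA : B ≤ A := (hx i₀ hi₀).1.trans (hx i₀ hi₀).2
  -- `x w ≥ B w` where `w ≥ 0` and `x w ≥ A w` where `w < 0`
  have hpt : ∀ i ∈ s, B * w i - (A - B) * (|w i| - w i) / 2 ≤ x i * w i := by
    intro i hi
    obtain ⟨hBx, hxA⟩ := hx i hi
    rcases le_or_gt 0 (w i) with hwi | hwi
    · rw [abs_of_nonneg hwi]; nlinarith
    · rw [abs_of_neg hwi]; nlinarith
  calc B - (A - B) * (C - 1) / 2
      ≤ B - (A - B) * (∑ i ∈ s, |w i| - 1) / 2 := by gcongr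
    _ = ∑ i ∈ s, (B * w i - (A - B) * (|w i| - w i) / 2) := by
        rw [sum_sub_distrib, ← mul_sum, ← sum_div, ← mul_sum, sum_sub_distrib, hw, mul_one]
    _ ≤ ∑ i ∈ s, x i * w i := sum_le_sum hpt

lemma sub_mul_inv_sub_one_div_two_pos {A B β : ℝ} (hB : 0 < B) (hβ : 0 < β) (hβ1 : β < 1)
    (h : A / B < (1 + β) / (1 - β)) : 0 < B - (A - B) * (β⁻¹ - 1) / 2 := by
  rw [div_lt_div_iff₀ hB (by linarith)] at h
  have : B - (A - B) * (β⁻¹ - 1) / 2 = (B * (1 + β) - A * (1 - β)) / (2 * β) := by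
    field_simp; ring
  rw [this]
  exact div_pos (by linarith) (by positivity)

theorem stmt13 (d n N : ℕ) (hd : 1 ≤ d) (hn : 1 ≤ n) (hN : 2 * n + 1 ≤ N)
    (p : (Fin d → ℝ) → ℝ) (hp : IsTrigPoly d n (fun θ => (p θ : ℂ)))
    (α : ℝ) (hα : α = 2 * n / N) (A B : ℝ)
    (hA : IsGreatest (Set.range fun k : Fin d → Fin N => p (trigGrid N k)) A)
    (hB : IsLeast (Set.range fun k : Fin d → Fin N => p (trigGrid N k)) B)
    (hpos : ∀ k : Fin d → Fin N, 0 < p (trigGrid N k))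
    (hratio : A / B < (1 + (1 - α) ^ ((d : ℝ) / 2)) / (1 - (1 - α) ^ ((d : ℝ) / 2))) :
    ∀ θ : Fin d → ℝ, 0 < p θ := by
  intro θ
  subst hα
  have hN' : 2 * n < N := by omega
  have hNR : (0 : ℝ) < N := by norm_cast; omega
  have hlow := sub_mul_sub_one_div_two_le_sum_mul (s := univ)
    (fun k _ => ⟨hB.2 ⟨k, rfl⟩, hA.2 ⟨k, rfl⟩⟩) (sum_vpWeight hN' θ) (sum_abs_vpWeight_le hN' θ)
  rw [hp.sum_trigGrid_mul_vpWeight hN' θ] at hlow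
  have hα0 : 0 < 1 - 2 * n / (N : ℝ) := by rw [sub_pos, div_lt_one hNR]; exact_mod_cast hN'
  have hα1 : 1 - 2 * n / (N : ℝ) < 1 := sub_lt_self _ (div_pos (by norm_cast; omega) hNR)
  obtain ⟨k₀, hk₀⟩ := hB.1
  have hgap := sub_mul_inv_sub_one_div_two_pos (hk₀ ▸ hpos k₀) (Real.rpow_pos_of_pos hα0 _)
    (Real.rpow_lt_one hα0.le hα1 (div_pos (by exact_mod_cast hd) two_pos)) hratio
  linarith
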